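/- Let A be the incidence matrix of a connected graph and suppose coordinate (edge) i is a bridge (removing it disconnects the graph). If A†A is the orthogonal projection onto the row space of A, then (A†A)·e_i = e_i, i.e., e_i lies in the row space of A. -/

import Mathlib

/-!
Let `S` be the set of vertices reachable from `src i` once edge `i` is deleted. Since `i` is a
bridge, `tgt i ∉ S`, while every other edge has both ends in `S` or neither. The sum of the rows
of `A` indexed by `S` is, at edge `j`, `[src j ∈ S] - [tgt j ∈ S]`, so it equals `eᵢ`.
-/

open Finset

namespace SimpleGraph

variable {V : Type*}

lemma Reachable.of_forall_adj_reachable {G G' : SimpleGraph V}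
    (h : ∀ u v, G.Adj u v → G'.Reachable u v) {u v : V} (huv : G.Reachable u v) :
    G'.Reachable u v := by
  rw [reachable_eq_reflTransGen] at h huv ⊢
  exact Relation.reflTransGen_closed h _ _ huv

lemma not_reachable_of_connected_of_not_connected {G G' : SimpleGraph V} {a b : V}
    (hG : G.Connected) (hG' : ¬G'.Connected)
    (hadj : ∀ u v, G.Adj u v → G'.Adj u v ∨ s(u, v) = s(a, b)) :
    ¬G'.Reachable a b := by
  intro hab
  refine hG' ((connected_iff G').2 ⟨fun u v => (hG u v).of_forall_adj_reachable ?_, hG.nonempty⟩)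
  intro x y hxy
  rcases hadj x y hxy with hxy' | hxy'
  · exact hxy'.reachable
  · rcases Sym2.eq_iff.1 hxy' with ⟨rfl, rfl⟩ | ⟨rfl, rfl⟩
    · exact hab
    · exact hab.symm

end SimpleGraph

section SignedIncidence

variable {V E : Type*} [DecidableEq V]

def signedIncidence (src tgt : E → V) : Matrix V E ℝ :=
  fun v e => if v = src e then 1 else if v = tgt e then -1 else 0

variable {src tgt : E → V}

lemma signedIncidence_apply_of_ne {j : E} (hj : src j ≠ tgt j) (v : V) :
    signedIncidence src tgt v j =
      (if v = src j then 1 else 0) - (if v = tgt j then 1 else 0) := by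
  unfold signedIncidence
  split_ifs <;> simp_all

lemma sum_signedIncidence_apply (S : Finset V) {j : E} (hj : src j ≠ tgt j) :
    (∑ v ∈ S, signedIncidence src tgt v) j =
      (if src j ∈ S then 1 else 0) - (if tgt j ∈ S then 1 else 0) := by
  rw [Finset.sum_apply j S fun v => signedIncidence src tgt v]
  simp only [signedIncidence_apply_of_ne hj, Finset.sum_sub_distrib, Finset.sum_ite_eq']

lemma sum_signedIncidence_eq_single [DecidableEq E] (hst : ∀ e, src e ≠ tgt e)
    (S : Finset V) {i : E} (hsrc : src i ∈ S) (htgt : tgt i ∉ S)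
    (hS : ∀ j, j ≠ i → (src j ∈ S ↔ tgt j ∈ S)) :
    ∑ v ∈ S, signedIncidence src tgt v = Pi.single i 1 := by
  ext j
  rw [sum_signedIncidence_apply S (hst j)]
  by_cases hji : j = i
  · subst hji
    simp [hsrc, htgt]
  · simp [hS j hji, hji]

end SignedIncidence

theorem bridge_in_row_space_general {V E : Type*} [Fintype V]
    [DecidableEq V] [DecidableEq E]
    (src tgt : E → V) (hst : ∀ e, src e ≠ tgt e)
    (A : Matrix V E ℝ)
    (hA : ∀ v e, A v e =
      if v = src e then (1 : ℝ) else if v = tgt e then -1 else 0)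
    (G : SimpleGraph V)
    (hG : ∀ u v, G.Adj u v ↔ u ≠ v ∧ ∃ e,
      (src e = u ∧ tgt e = v) ∨ (src e = v ∧ tgt e = u))
    (hconn : G.Connected)
    (i : E)
    (G' : SimpleGraph V)
    (hG' : ∀ u v, G'.Adj u v ↔ u ≠ v ∧ ∃ e, e ≠ i ∧
      ((src e = u ∧ tgt e = v) ∨ (src e = v ∧ tgt e = u)))
    (hbridge : ¬ G'.Connected) :
    (Pi.single i 1 : E → ℝ) ∈ Submodule.span ℝ (Set.range fun v => A v) := by
  classical
  obtain rfl : A = signedIncidence src tgt := Matrix.ext hA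
  have hcut : ¬G'.Reachable (src i) (tgt i) := by
    refine SimpleGraph.not_reachable_of_connected_of_not_connected hconn hbridge fun u v huv => ?_
    obtain ⟨hne, e, he⟩ := (hG u v).1 huv
    by_cases hei : e = i
    · subst hei
      rcases he with ⟨rfl, rfl⟩ | ⟨rfl, rfl⟩
      · exact Or.inr rfl
      · exact Or.inr Sym2.eq_swap
    · exact Or.inl ((hG' u v).2 ⟨hne, e, hei, he⟩)
  let S := univ.filter (G'.Reachable (src i))
  have hS : ∀ j, j ≠ i → (src j ∈ S ↔ tgt j ∈ S) := fun j hji => by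
    have hadj : G'.Adj (src j) (tgt j) := (hG' _ _).2 ⟨hst j, j, hji, .inl ⟨rfl, rfl⟩⟩
    simpa [S] using ⟨fun h => h.trans hadj.reachable, fun h => h.trans hadj.symm.reachable⟩
  rw [← sum_signedIncidence_eq_single hst S (by simp [S]) (by simpa [S]) hS]
  exact Submodule.sum_mem _ fun v _ => Submodule.subset_span ⟨v, rfl⟩

/-- If edge `i` is a bridge of a connected graph with signed incidence matrix
`A`, then `eᵢ` lies in the row space of `A` (equivalently `(A†A)eᵢ = eᵢ`). -/
theorem bridge_in_row_space {V E : Type*} [Fintype V] [Fintype E]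
    [DecidableEq V] [DecidableEq E]
    (src tgt : E → V) (hst : ∀ e, src e ≠ tgt e)
    (A : Matrix V E ℝ)
    (hA : ∀ v e, A v e =
      if v = src e then (1 : ℝ) else if v = tgt e then -1 else 0)
    (G : SimpleGraph V)
    (hG : ∀ u v, G.Adj u v ↔ u ≠ v ∧ ∃ e,
      (src e = u ∧ tgt e = v) ∨ (src e = v ∧ tgt e = u))
    (hconn : G.Connected)
    (i : E)
    (G' : SimpleGraph V)
    (hG' : ∀ u v, G'.Adj u v ↔ u ≠ v ∧ ∃ e, e ≠ i ∧
      ((src e = u ∧ tgt e = v) ∨ (src e = v ∧ tgt e = u)))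
    (hbridge : ¬ G'.Connected) :
    (Pi.single i 1 : E → ℝ) ∈ Submodule.span ℝ (Set.range fun v => A v) :=
  bridge_in_row_space_general src tgt hst A hA G hG hconn i G' hG' hbridge
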